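/- For every integer d ≥ 2 and every real p ∈ (1/(d+1), 1/2): (a) f^{d,p}(λ) converges as λ → ∞ to exp(−p_d^*/d − (d−1)/d); (b) this limit is strictly smaller than f^{d,p}(0) = e^{−p_d^*}; and consequently (c) the supremum M^{d,p} is attained, i.e., there exists λ₀ ∈ [0,∞) with f^{d,p}(λ₀) = M^{d,p}. (Intermediate claims in the proof of Lemma 7: in the variable y = e^{−λ}, the function g(y) = f^{d,p}(−log y) extends continuously to [0,1] with g(0) = exp(−p_d^*/d − (d−1)/d) < g(1) = e^{−p_d^*}.) -/

import Mathlib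

/-
Writing `Λ = Λ_d(λ)`, the `u`-th summand of `f^{d,p}(λ)` equals
`binom(d-1,u) Φ_d^{d-1-u} e^{r_u λ} s_{u+1,u}(Φ_d, Λ)` with
`r_u = 1 - p̂(1+u) - (u+1)(d-1-u)(1-p̂)/(d-1)`. Here `r_0 = 0`, while `r_u < 0` for
`1 ≤ u ≤ d-1` because `p̂ d > 1`, i.e. `p > 1/(d+1)`; and `s_{u+1,u}(Φ_d, Λ) → s_{u+1,u}(Φ_d, 0) = 1`
as `Λ → 0`. Hence `f^{d,p}(λ) → e^{-p_d^*} Φ_d^{d-1}`. At `λ = 0` the `s_{d,u}(Φ_d, 1)` sum to `1`, so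
`f^{d,p}(0) = e^{-p_d^*}`, which exceeds the limit since `p_d^* < 1`. A continuous function on
`[0, ∞)` whose limit at infinity lies below one of its values attains its supremum.
-/

open Real Finset

/-- `frogT x y u = s_{u+1,u}(x,y)`, the diagonal of the recursion. -/
noncomputable def frogT (x y : ℝ) : ℕ → ℝ
  | 0 => 1
  | k + 1 => 1 - ∑ i ∈ (Finset.range (k + 1)).attach,
      (((k + 1).choose i.1 : ℕ) : ℝ) * (x * y ^ (i.1 + 1)) ^ (k + 1 - i.1) * frogT x y i.1
  decreasing_by exact Finset.mem_range.mp i.2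

/-- `frogS d u x y = s_{d,u}(x,y)`. -/
noncomputable def frogS (d u : ℕ) (x y : ℝ) : ℝ :=
  (((d - 1).choose u : ℕ) : ℝ) * (x * y ^ (u + 1)) ^ (d - 1 - u) * frogT x y u

noncomputable def pstar (d : ℕ) (p : ℝ) : ℝ := p * ((d : ℝ) - 1) / ((d : ℝ) - ((d : ℝ) + 1) * p)

noncomputable def phat (p : ℝ) : ℝ := p / (1 - p)

noncomputable def Phi (d : ℕ) (p : ℝ) : ℝ := Real.exp (-(1 - pstar d p) / (d : ℝ))

noncomputable def Lam (d : ℕ) (p l : ℝ) : ℝ := Real.exp (-((1 - phat p) * l) / ((d : ℝ) - 1))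

noncomputable def frogF (d : ℕ) (p l : ℝ) : ℝ :=
  Real.exp (-(pstar d p)) * ∑ u ∈ Finset.range d,
    Real.exp ((1 - phat p * (1 + (u : ℝ))) * l) * frogS d u (Phi d p) (Lam d p l)

noncomputable def frogM (d : ℕ) (p : ℝ) : ℝ := sSup (frogF d p '' Set.Ici 0)

open Filter Topology

lemma frogT_succ (x y : ℝ) (k : ℕ) :
    frogT x y (k + 1) = 1 - ∑ i ∈ range (k + 1),
      (((k + 1).choose i : ℕ) : ℝ) * (x * y ^ (i + 1)) ^ (k + 1 - i) * frogT x y i := by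
  rw [frogT, Finset.sum_attach (range (k + 1))
    (fun i => (((k + 1).choose i : ℕ) : ℝ) * (x * y ^ (i + 1)) ^ (k + 1 - i) * frogT x y i)]

lemma frogT_y_zero (x : ℝ) : ∀ k, frogT x 0 k = 1
  | 0 => by rw [frogT]
  | k + 1 => by
    rw [frogT_succ, Finset.sum_eq_zero, sub_zero]
    intro i hi
    have : k + 1 - i ≠ 0 := by have := mem_range.mp hi; omega
    simp [this]

lemma continuous_frogT (x : ℝ) (k : ℕ) : Continuous fun y => frogT x y k := by
  induction k using Nat.strong_induction_on with
  | _ k ih =>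
    cases k with
    | zero => simpa [frogT] using continuous_const
    | succ k =>
      simp only [frogT_succ]
      exact continuous_const.sub <| continuous_finsetSum _ fun i hi =>
        (continuous_const.mul ((continuous_const.mul (continuous_pow _)).pow _)).mul
          (ih i (mem_range.mp hi))

lemma sum_frogS {d : ℕ} (hd : d ≠ 0) (x y : ℝ) : ∑ u ∈ range d, frogS d u x y = 1 := by
  obtain ⟨k, rfl⟩ : ∃ k, d = k + 1 := ⟨d - 1, by omega⟩
  rw [sum_range_succ, show frogS (k + 1) k x y = frogT x y k by simp [frogS]]
  cases k with
  | zero => simp [frogT]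
  | succ k =>
    rw [frogT_succ]
    simp only [frogS, Nat.add_sub_cancel]
    ring

lemma Lam_pow (d : ℕ) (p l : ℝ) (n : ℕ) :
    Lam d p l ^ n = exp ((n : ℝ) * (-((1 - phat p) * l) / ((d : ℝ) - 1))) := by
  rw [Lam, ← Real.exp_nat_mul]

/-- The exponential rate `r_u` of the `u`-th summand of `frogF`, as a function of `q = p̂`. -/
noncomputable def frogRate (d : ℕ) (q : ℝ) (u : ℕ) : ℝ :=
  1 - q * (1 + (u : ℝ)) - (((u + 1) * (d - 1 - u) : ℕ) : ℝ) * (1 - q) / ((d : ℝ) - 1)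

lemma frogRate_zero {d : ℕ} (hd : 2 ≤ d) (q : ℝ) : frogRate d q 0 = 0 := by
  have hd1 : (d : ℝ) - 1 ≠ 0 := by
    have : (2 : ℝ) ≤ d := by exact_mod_cast hd
    linarith
  rw [frogRate, show (0 + 1) * (d - 1 - 0) = d - 1 by omega, Nat.cast_sub (by omega)]
  field_simp
  ring

lemma frogRate_neg {d : ℕ} {q : ℝ} (hq : q ≤ 1) (hdq : 1 < d * q) {u : ℕ} (hu : 1 ≤ u)
    (hud : u < d) : frogRate d q u < 0 := by
  have hu' : (1 : ℝ) ≤ u := by exact_mod_cast hu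
  rcases (Nat.succ_le_of_lt hud).eq_or_lt with hlast | hmid
  · have hd : (d : ℝ) = u + 1 := by exact_mod_cast hlast.symm
    rw [frogRate, show d - 1 - u = 0 by omega]
    simp only [Nat.mul_zero, Nat.cast_zero, zero_mul, zero_div, sub_zero]
    nlinarith
  · have hd1 : (0 : ℝ) < (d : ℝ) - 1 := by
      have : (2 : ℝ) < d := by exact_mod_cast (show 2 < d by omega)
      linarith
    have hq0 : 0 < q := by
      by_contra! h
      nlinarith [(Nat.cast_nonneg d : (0 : ℝ) ≤ d)]
    have hcount : (d : ℝ) - 1 ≤ (((u + 1) * (d - 1 - u) : ℕ) : ℝ) := by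
      obtain ⟨v, hv⟩ : ∃ v, d - 1 - u = v + 1 := ⟨d - 2 - u, by omega⟩
      have hd' : (d : ℝ) = u + v + 2 := by exact_mod_cast (show d = u + v + 2 by omega)
      rw [hv]
      push_cast
      nlinarith [(Nat.cast_nonneg v : (0 : ℝ) ≤ v)]
    have hdecay : 1 - q ≤ (((u + 1) * (d - 1 - u) : ℕ) : ℝ) * (1 - q) / ((d : ℝ) - 1) := by
      rw [le_div_iff₀ hd1]
      nlinarith
    rw [frogRate]
    nlinarith

lemma exp_mul_frogS_Lam (d u : ℕ) (p x l : ℝ) :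
    exp ((1 - phat p * (1 + (u : ℝ))) * l) * frogS d u x (Lam d p l)
      = (((d - 1).choose u : ℕ) : ℝ) * x ^ (d - 1 - u) * exp (frogRate d (phat p) u * l)
        * frogT x (Lam d p l) u := by
  rw [frogS, mul_pow, ← pow_mul, Lam_pow, frogRate,
    show (1 - phat p * (1 + (u : ℝ)) - (((u + 1) * (d - 1 - u) : ℕ) : ℝ) * (1 - phat p)
        / ((d : ℝ) - 1)) * l = (1 - phat p * (1 + (u : ℝ))) * l
        + (((u + 1) * (d - 1 - u) : ℕ) : ℝ) * (-((1 - phat p) * l) / ((d : ℝ) - 1)) by ring,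
    exp_add]
  ring

lemma tendsto_Lam_atTop {d : ℕ} (hd : 2 ≤ d) {p : ℝ} (hq : phat p < 1) :
    Tendsto (Lam d p) atTop (𝓝 0) := by
  have hd1 : (0 : ℝ) < (d : ℝ) - 1 := by
    have : (2 : ℝ) ≤ d := by exact_mod_cast hd
    linarith
  have hc : -(1 - phat p) / ((d : ℝ) - 1) < 0 := div_neg_of_neg_of_pos (by linarith) hd1
  refine (tendsto_exp_atBot.comp (tendsto_id.const_mul_atTop_of_neg hc)).congr fun l => ?_
  rw [Function.comp_apply, id, Lam]
  ring_nf

lemma tendsto_exp_mul_frogS_Lam {d u : ℕ} (hd : 2 ≤ d) (hud : u < d) {p : ℝ} (hq : phat p < 1)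
    (hdq : 1 < d * phat p) (x : ℝ) :
    Tendsto (fun l => exp ((1 - phat p * (1 + (u : ℝ))) * l) * frogS d u x (Lam d p l)) atTop
      (𝓝 (if u = 0 then x ^ (d - 1) else 0)) := by
  have hT : Tendsto (fun l => frogT x (Lam d p l) u) atTop (𝓝 1) := by
    have := ((continuous_frogT x u).tendsto 0).comp (tendsto_Lam_atTop hd hq)
    rwa [frogT_y_zero] at this
  simp only [exp_mul_frogS_Lam]
  rcases u.eq_zero_or_pos with rfl | hu
  · simpa [frogRate_zero hd] using tendsto_const_nhds.mul hT
  · have hE : Tendsto (fun l => exp (frogRate d (phat p) u * l)) atTop (𝓝 0) :=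
      tendsto_exp_atBot.comp (tendsto_id.const_mul_atTop_of_neg (frogRate_neg hq.le hdq hu hud))
    simpa [hu.ne'] using (tendsto_const_nhds.mul hE).mul hT

lemma tendsto_frogF_atTop {d : ℕ} (hd : 2 ≤ d) {p : ℝ} (hq : phat p < 1)
    (hdq : 1 < d * phat p) :
    Tendsto (frogF d p) atTop (𝓝 (exp (-pstar d p) * Phi d p ^ (d - 1))) := by
  have hsum := tendsto_finsetSum (range d) fun u hu =>
    tendsto_exp_mul_frogS_Lam hd (mem_range.1 hu) hq hdq (Phi d p)
  rw [sum_ite_eq' (range d) 0, if_pos (mem_range.2 (by omega))] at hsum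
  exact hsum.const_mul _

lemma exp_neg_pstar_mul_Phi_pow {d : ℕ} (hd : d ≠ 0) (p : ℝ) :
    exp (-pstar d p) * Phi d p ^ (d - 1)
      = exp (-(pstar d p) / (d : ℝ) - ((d : ℝ) - 1) / (d : ℝ)) := by
  rw [Phi, ← exp_nat_mul, ← exp_add, Nat.cast_sub (by omega), Nat.cast_one]
  congr 1
  field_simp
  ring

lemma frogF_zero {d : ℕ} (hd : d ≠ 0) (p : ℝ) : frogF d p 0 = exp (-pstar d p) := by
  simp only [frogF, mul_zero, exp_zero, one_mul, show Lam d p 0 = 1 by simp [Lam]]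
  rw [sum_frogS hd, mul_one]

lemma continuous_frogF (d : ℕ) (p : ℝ) : Continuous (frogF d p) := by
  have hLam : Continuous (Lam d p) := by unfold Lam; fun_prop
  unfold frogF frogS
  exact continuous_const.mul <| continuous_finsetSum _ fun u _ =>
    (continuous_exp.comp (continuous_const.mul continuous_id)).mul
      ((continuous_const.mul ((continuous_const.mul (hLam.pow _)).pow _)).mul
        ((continuous_frogT _ u).comp hLam))

lemma phat_lt_one {p : ℝ} (hp : p < 1 / 2) : phat p < 1 := by
  rw [phat, div_lt_one (by linarith)]
  linarith

lemma one_lt_mul_phat {d : ℕ} {p : ℝ} (hp : 1 / ((d : ℝ) + 1) < p) (hp1 : p < 1) :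
    1 < d * phat p := by
  rw [div_lt_iff₀ (by positivity)] at hp
  rw [phat, mul_div_assoc', one_lt_div (by linarith)]
  linarith

lemma pstar_lt_one {d : ℕ} (hd : d ≠ 0) {p : ℝ} (hp : p < 1 / 2) : pstar d p < 1 := by
  have hd1 : (1 : ℝ) ≤ d := by exact_mod_cast Nat.one_le_iff_ne_zero.2 hd
  have hden : 0 < (d : ℝ) - ((d : ℝ) + 1) * p := by nlinarith
  rw [pstar, div_lt_one hden]
  nlinarith

lemma exp_neg_div_sub_lt_exp_neg {s t : ℝ} (hs : s < 1) (ht : 1 < t) :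
    exp (-s / t - (t - 1) / t) < exp (-s) := by
  rw [exp_lt_exp, ← sub_div, div_lt_iff₀ (by linarith)]
  nlinarith

lemma exists_isGreatest_image_Ici_of_tendsto {f : ℝ → ℝ} {L a : ℝ} (hf : Continuous f)
    (hlim : Tendsto f atTop (𝓝 L)) (ha : L < f a) :
    ∃ x₀ ∈ Set.Ici a, IsGreatest (f '' Set.Ici a) (f x₀) := by
  obtain ⟨x₀, hx₀, hmax⟩ :=
    hf.continuousOn.exists_isMaxOn' isClosed_Ici Set.self_mem_Ici (x₀ := a) (by
      rw [cocompact_eq_atBot_atTop, inf_sup_right, (disjoint_atBot_principal_Ici a).eq_bot,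
        bot_sup_eq]
      exact ((hlim.eventually_lt_const ha).mono fun _ h => h.le).filter_mono inf_le_left)
  exact ⟨x₀, hx₀, Set.mem_image_of_mem f hx₀, Set.forall_mem_image.2 hmax⟩

/-- Intermediate claims in the proof of Lemma 7: for `d ≥ 2` and `p ∈ (1/(d+1), 1/2)`:
(a) `f^{d,p}(λ) → exp(-p_d^*/d - (d-1)/d)` as `λ → ∞`;
(b) this limit is strictly smaller than `f^{d,p}(0) = e^{-p_d^*}`;
(c) the supremum `M^{d,p}` is attained at some `λ₀ ≥ 0`. -/
theorem frogF_limit_and_max (d : ℕ) (hd : 2 ≤ d) (p : ℝ)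
    (hp : p ∈ Set.Ioo (1 / ((d : ℝ) + 1)) (1 / 2)) :
    Filter.Tendsto (frogF d p) Filter.atTop
        (nhds (Real.exp (-(pstar d p) / (d : ℝ) - ((d : ℝ) - 1) / (d : ℝ)))) ∧
      Real.exp (-(pstar d p) / (d : ℝ) - ((d : ℝ) - 1) / (d : ℝ)) < frogF d p 0 ∧
      frogF d p 0 = Real.exp (-(pstar d p)) ∧
      ∃ l₀ : ℝ, 0 ≤ l₀ ∧ frogF d p l₀ = frogM d p := by
  obtain ⟨hp1, hp2⟩ := hp
  have hd0 : d ≠ 0 := by omega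
  have hlim := tendsto_frogF_atTop hd (phat_lt_one hp2) (one_lt_mul_phat hp1 (by linarith))
  rw [exp_neg_pstar_mul_Phi_pow hd0] at hlim
  have hlt : exp (-(pstar d p) / (d : ℝ) - ((d : ℝ) - 1) / (d : ℝ)) < frogF d p 0 := by
    rw [frogF_zero hd0]
    exact exp_neg_div_sub_lt_exp_neg (pstar_lt_one hd0 hp2) (by exact_mod_cast hd)
  obtain ⟨l₀, hl₀, hmax⟩ := exists_isGreatest_image_Ici_of_tendsto (continuous_frogF d p) hlim hlt
  exact ⟨hlim, hlt, frogF_zero hd0 p, l₀, hl₀, hmax.csSup_eq.symm⟩
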